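/- Let ψ_c and ψ_j be scale functions with ∫₀¹ ψ_c(s)/(s ψ_j(s)) ds < ∞. Then there exists a constant C > 0 such that ψ_c(r) ≤ C ψ_j(r) for all 0 < r ≤ 1. -/

import Mathlib

open Set MeasureTheory

/-- A scale function: a homeomorphism of `[0,∞)` (encoded as a continuous, strictly
monotone surjection of `Ici 0` onto itself fixing `0`) satisfying the two-sided
power-type doubling estimate with constant `C ≥ 1` and exponents `0 < β₁ ≤ β₂`. -/
def IsScaleFunction (ψ : ℝ → ℝ) (C β₁ β₂ : ℝ) : Prop :=
  1 ≤ C ∧ 0 < β₁ ∧ β₁ ≤ β₂ ∧ ψ 0 = 0 ∧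
  ContinuousOn ψ (Ici 0) ∧ StrictMonoOn ψ (Ici 0) ∧
  (∀ y, 0 ≤ y → ∃ x, 0 ≤ x ∧ ψ x = y) ∧
  ∀ r R : ℝ, 0 < r → r ≤ R →
    C⁻¹ * (R / r) ^ β₁ ≤ ψ R / ψ r ∧ ψ R / ψ r ≤ C * (R / r) ^ β₂

/-!
Since `ψ_c` at most multiplies by a fixed constant `A = C_c 2^{β₂}` over a factor two,
and `s ψ_j(s)` is increasing, the integrand `ψ_c(s) / (s ψ_j(s))` is at least
`ψ_c(r) / (A r ψ_j(r))` on `(r/2, r)`. Integrating over this interval of length `r/2`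
gives `ψ_c(r) / ψ_j(r) ≤ 2 A ∫₀¹ ψ_c(s) / (s ψ_j(s)) ds` for every `0 < r ≤ 1`.
-/

lemma mul_sub_le_setIntegral_of_le {f : ℝ → ℝ} {s : Set ℝ} {a b m : ℝ} (hab : a ≤ b)
    (hs : MeasurableSet s) (hsub : Ioo a b ⊆ s) (hf : IntegrableOn f s)
    (hf₀ : ∀ x ∈ s, 0 ≤ f x) (hm : ∀ x ∈ Ioo a b, m ≤ f x) :
    m * (b - a) ≤ ∫ x in s, f x :=
  calc m * (b - a) = m * volume.real (Ioo a b) := by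
        rw [measureReal_def, Real.volume_Ioo, ENNReal.toReal_ofReal (sub_nonneg.2 hab)]
    _ ≤ ∫ x in Ioo a b, f x := by
        rw [mul_comm, ← smul_eq_mul]
        exact setIntegral_ge_of_const_le measurableSet_Ioo (by simp [Real.volume_Ioo]) hm
          (hf.mono_set hsub)
    _ ≤ ∫ x in s, f x :=
        setIntegral_mono_set hf ((ae_restrict_iff' hs).2 (ae_of_all _ hf₀)) hsub.eventuallyLE

namespace IsScaleFunction

variable {ψ : ℝ → ℝ} {C β₁ β₂ : ℝ}

lemma pos (hψ : IsScaleFunction ψ C β₁ β₂) {x : ℝ} (hx : 0 < x) : 0 < ψ x := by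
  obtain ⟨-, -, -, h₀, -, hmono, -⟩ := hψ
  simpa [h₀] using hmono self_mem_Ici hx.le hx

lemma const_pos (hψ : IsScaleFunction ψ C β₁ β₂) : 0 < C :=
  zero_lt_one.trans_le hψ.1

lemma monotoneOn (hψ : IsScaleFunction ψ C β₁ β₂) : MonotoneOn ψ (Ici 0) :=
  hψ.2.2.2.2.2.1.monotoneOn

lemma le_mul_of_le_two_mul (hψ : IsScaleFunction ψ C β₁ β₂) {x r : ℝ} (hx : 0 < x)
    (hxr : x ≤ r) (hrx : r ≤ 2 * x) : ψ r ≤ C * 2 ^ β₂ * ψ x := by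
  have hψx := hψ.pos hx
  obtain ⟨hC, hβ₁, hβ, -, -, -, -, hest⟩ := hψ
  have hpow : (r / x) ^ β₂ ≤ 2 ^ β₂ :=
    Real.rpow_le_rpow (div_pos (hx.trans_le hxr) hx).le ((div_le_iff₀ hx).2 hrx)
      (by linarith)
  calc ψ r = ψ r / ψ x * ψ x := (div_mul_cancel₀ _ hψx.ne').symm
    _ ≤ C * (r / x) ^ β₂ * ψ x := by gcongr; exact (hest x r hx hxr).2
    _ ≤ C * 2 ^ β₂ * ψ x := by gcongr

variable {ψc ψj : ℝ → ℝ} {Cc β₁c β₂c Cj β₁j β₂j : ℝ}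

lemma div_mul_pos (hψc : IsScaleFunction ψc Cc β₁c β₂c)
    (hψj : IsScaleFunction ψj Cj β₁j β₂j) {s : ℝ} (hs : 0 < s) :
    0 < ψc s / (s * ψj s) :=
  div_pos (hψc.pos hs) (mul_pos hs (hψj.pos hs))

lemma div_le_integrand (hψc : IsScaleFunction ψc Cc β₁c β₂c)
    (hψj : IsScaleFunction ψj Cj β₁j β₂j) {r x : ℝ} (hx : x ∈ Ioo (r / 2) r) :
    ψc r / (Cc * 2 ^ β₂c * (r * ψj r)) ≤ ψc x / (x * ψj x) := by
  have hx₀ : 0 < x := by linarith [hx.1, hx.2]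
  have hψcx := hψc.pos hx₀
  have hψjx := hψj.pos hx₀
  rw [← div_div]
  refine div_le_div₀ hψcx.le ?_ (mul_pos hx₀ hψjx) ?_
  · rw [div_le_iff₀ (mul_pos hψc.const_pos (by positivity)), mul_comm]
    exact hψc.le_mul_of_le_two_mul hx₀ hx.2.le (by linarith [hx.1])
  · exact mul_le_mul hx.2.le (hψj.monotoneOn hx₀.le (hx₀.trans hx.2).le hx.2.le) hψjx.le
      (hx₀.trans hx.2).le

lemma integral_div_nonneg (hψc : IsScaleFunction ψc Cc β₁c β₂c)
    (hψj : IsScaleFunction ψj Cj β₁j β₂j) :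
    0 ≤ ∫ s in Ioo 0 1, ψc s / (s * ψj s) :=
  setIntegral_nonneg measurableSet_Ioo fun _ hs => (hψc.div_mul_pos hψj hs.1).le

lemma div_le_mul_integral (hψc : IsScaleFunction ψc Cc β₁c β₂c)
    (hψj : IsScaleFunction ψj Cj β₁j β₂j)
    (hint : IntegrableOn (fun s => ψc s / (s * ψj s)) (Ioo 0 1)) {r : ℝ} (hr : 0 < r)
    (hr₁ : r ≤ 1) :
    ψc r / ψj r ≤ 2 * (Cc * 2 ^ β₂c) * ∫ s in Ioo 0 1, ψc s / (s * ψj s) := by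
  have hlow := mul_sub_le_setIntegral_of_le (by linarith) measurableSet_Ioo
    (fun x hx => ⟨by linarith [hx.1], hx.2.trans_le hr₁⟩) hint
    (fun _ hs => (hψc.div_mul_pos hψj hs.1).le)
    (fun x hx => div_le_integrand hψc hψj hx)
  calc ψc r / ψj r
      = 2 * (Cc * 2 ^ β₂c) * (ψc r / (Cc * 2 ^ β₂c * (r * ψj r)) * (r - r / 2)) := by
        field_simp [(hψj.pos hr).ne', hr.ne', hψc.const_pos.ne']
        ring
    _ ≤ _ := by
        have := hψc.const_pos
        gcongr

end IsScaleFunction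

theorem psi_c_le_psi_j_near_zero (ψc ψj : ℝ → ℝ) (Cc β₁c β₂c Cj β₁j β₂j : ℝ)
    (hψc : IsScaleFunction ψc Cc β₁c β₂c)
    (hψj : IsScaleFunction ψj Cj β₁j β₂j)
    (hint : IntegrableOn (fun s => ψc s / (s * ψj s)) (Ioo 0 1) volume) :
    ∃ C : ℝ, 0 < C ∧ ∀ r : ℝ, 0 < r → r ≤ 1 → ψc r ≤ C * ψj r := by
  set K := 2 * (Cc * 2 ^ β₂c) * ∫ s in Ioo 0 1, ψc s / (s * ψj s)
  have hK : 0 ≤ K := by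
    have := hψc.const_pos
    have := hψc.integral_div_nonneg hψj
    positivity
  refine ⟨K + 1, by linarith, fun r hr hr₁ => ?_⟩
  have hψjr := hψj.pos hr
  calc ψc r ≤ K * ψj r := (div_le_iff₀ hψjr).1 (hψc.div_le_mul_integral hψj hint hr hr₁)
    _ ≤ (K + 1) * ψj r := by gcongr; linarith
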